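/- arXiv:2310.02020 — 3 statements merged into one kernel-verified Lean document; each statement's English description precedes it below -/
import Mathlib

section
/- Let S be a discrete semigroup and F a filter on S whose closure F̄ = ⋂_{V∈F} cl(V) is a closed subsemigroup of βS. A subset A ⊆ S is F-thick if and only if there exists a minimal left ideal L of F̄ with L ⊆ cl(A). -/
attribute [local instance] Ultrafilter.mul Ultrafilter.semigroup
  Ultrafilter.add Ultrafilter.addSemigroup

/-- The closure of `A ⊆ S` in `βS`: the set of ultrafilters containing `A`. -/
def ucl {S : Type} (A : Set S) : Set (Ultrafilter S) := {p | A ∈ p}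

/-- The closed subset `F̄ = ⋂_{V ∈ F} cl V` of `βS` determined by a filter `F`. -/
def Fbar {S : Type} (F : Filter S) : Set (Ultrafilter S) := {p | (↑p : Filter S) ≤ F}

/-- The dual (mesh) `F*` of a filter: sets meeting every member of `F`. -/
def FStar {S : Type} (F : Filter S) : Set (Set S) := {A | ∀ B ∈ F, (A ∩ B).Nonempty}

section Mul

variable {S : Type}

/-- `A` is thick: every finite set has a right translate inside `A`. -/
def IsThick [Mul S] (A : Set S) : Prop :=
  ∀ G : Finset S, ∃ x : S, ∀ t ∈ G, t * x ∈ A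

/-- `A` is syndetic: finitely many translates of `A` cover `S`. -/
def IsSyndetic [Mul S] (A : Set S) : Prop :=
  ∃ G : Finset S, (⋃ t ∈ G, {y : S | t * y ∈ A}) = Set.univ

/-- `A` is `F`-thick. -/
def FThick [Mul S] (F : Filter S) (A : Set S) : Prop :=
  ∃ V ∈ F, ∀ H : Finset S, ↑H ⊆ V → (⋂ t ∈ H, {y : S | t * y ∈ A}) ∈ FStar F

/-- `A` is `F`-syndetic. -/
def FSyndetic [Mul S] (F : Filter S) (A : Set S) : Prop :=
  ∀ V ∈ F, ∃ H : Finset S, ↑H ⊆ V ∧ (⋃ t ∈ H, {y : S | t * y ∈ A}) ∈ F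

/-- `F` is an idempotent filter: `F ⊆ F · F`. -/
def IdemFilter [Mul S] (F : Filter S) : Prop :=
  ∀ A ∈ F, {x : S | {y : S | x * y ∈ A} ∈ F} ∈ F

/-- `L` is a left ideal of the subsemigroup `T` of `βS`. -/
def IsLeftIdealIn [Semigroup S] (T L : Set (Ultrafilter S)) : Prop :=
  L.Nonempty ∧ L ⊆ T ∧ ∀ p ∈ T, ∀ q ∈ L, p * q ∈ L

/-- `L` is a minimal left ideal of the subsemigroup `T` of `βS`. -/
def IsMinLeftIdealIn [Semigroup S] (T L : Set (Ultrafilter S)) : Prop :=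
  IsLeftIdealIn T L ∧ ∀ L', IsLeftIdealIn T L' → L' ⊆ L → L' = L

/-- `R` is a right ideal of the subsemigroup `T` of `βS`. -/
def IsRightIdealIn [Semigroup S] (T R : Set (Ultrafilter S)) : Prop :=
  R.Nonempty ∧ R ⊆ T ∧ ∀ q ∈ T, ∀ p ∈ R, p * q ∈ R

/-- `R` is a minimal right ideal of the subsemigroup `T` of `βS`. -/
def IsMinRightIdealIn [Semigroup S] (T R : Set (Ultrafilter S)) : Prop :=
  IsRightIdealIn T R ∧ ∀ R', IsRightIdealIn T R' → R' ⊆ R → R' = R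

/-- `I` is a two-sided ideal of the subsemigroup `T` of `βS`. -/
def IsIdealIn [Semigroup S] (T I : Set (Ultrafilter S)) : Prop :=
  I.Nonempty ∧ I ⊆ T ∧ ∀ p ∈ T, ∀ q ∈ I, p * q ∈ I ∧ q * p ∈ I

/-- The smallest two-sided ideal `K(T)` of `T`. -/
def smallestIdealIn [Semigroup S] (T : Set (Ultrafilter S)) : Set (Ultrafilter S) :=
  ⋂₀ {I | IsIdealIn T I}

/-- `A` is strongly `F`-central. -/
def StronglyFCentral [Semigroup S] (F : Filter S) (A : Set S) : Prop :=
  ∀ L, IsMinLeftIdealIn (Fbar F) L → ∃ p ∈ L, p * p = p ∧ p ∈ ucl A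

/-- A family of sets has the `F`-thick finite intersection property. -/
def FThickFIP [Mul S] (F : Filter S) (𝒜 : Set (Set S)) : Prop :=
  ∀ T : Finset (Set S), ↑T ⊆ 𝒜 → FThick F (⋂₀ (T : Set (Set S)))

/-- A family of sets has the finite intersection property. -/
def HasFIP (𝒜 : Set (Set S)) : Prop :=
  ∀ T : Finset (Set S), ↑T ⊆ 𝒜 → (⋂₀ (T : Set (Set S))).Nonempty

end Mul

section Add

variable {S : Type}

/-- Additive version of `IsThick`. -/
def AddIsThick [Add S] (A : Set S) : Prop :=
  ∀ G : Finset S, ∃ x : S, ∀ t ∈ G, t + x ∈ A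

/-- Additive version of `IsSyndetic`. -/
def AddIsSyndetic [Add S] (A : Set S) : Prop :=
  ∃ G : Finset S, (⋃ t ∈ G, {y : S | t + y ∈ A}) = Set.univ

/-- Additive version of `FThick`. -/
def AddFThick [Add S] (F : Filter S) (A : Set S) : Prop :=
  ∃ V ∈ F, ∀ H : Finset S, ↑H ⊆ V → (⋂ t ∈ H, {y : S | t + y ∈ A}) ∈ FStar F

/-- Additive version of `FSyndetic`. -/
def AddFSyndetic [Add S] (F : Filter S) (A : Set S) : Prop :=
  ∀ V ∈ F, ∃ H : Finset S, ↑H ⊆ V ∧ (⋃ t ∈ H, {y : S | t + y ∈ A}) ∈ F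

/-- Additive version of `IsLeftIdealIn`. -/
def AddIsLeftIdealIn [AddSemigroup S] (T L : Set (Ultrafilter S)) : Prop :=
  L.Nonempty ∧ L ⊆ T ∧ ∀ p ∈ T, ∀ q ∈ L, p + q ∈ L

/-- Additive version of `IsMinLeftIdealIn`. -/
def AddIsMinLeftIdealIn [AddSemigroup S] (T L : Set (Ultrafilter S)) : Prop :=
  AddIsLeftIdealIn T L ∧ ∀ L', AddIsLeftIdealIn T L' → L' ⊆ L → L' = L

/-- Additive version of `IsRightIdealIn`. -/
def AddIsRightIdealIn [AddSemigroup S] (T R : Set (Ultrafilter S)) : Prop :=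
  R.Nonempty ∧ R ⊆ T ∧ ∀ q ∈ T, ∀ p ∈ R, p + q ∈ R

/-- Additive version of `IsMinRightIdealIn`. -/
def AddIsMinRightIdealIn [AddSemigroup S] (T R : Set (Ultrafilter S)) : Prop :=
  AddIsRightIdealIn T R ∧ ∀ R', AddIsRightIdealIn T R' → R' ⊆ R → R' = R

/-- Additive version of `IsIdealIn`. -/
def AddIsIdealIn [AddSemigroup S] (T I : Set (Ultrafilter S)) : Prop :=
  I.Nonempty ∧ I ⊆ T ∧ ∀ p ∈ T, ∀ q ∈ I, p + q ∈ I ∧ q + p ∈ I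

/-- Additive version of `smallestIdealIn`. -/
def addSmallestIdealIn [AddSemigroup S] (T : Set (Ultrafilter S)) : Set (Ultrafilter S) :=
  ⋂₀ {I | AddIsIdealIn T I}

/-- Additive version of `StronglyFCentral`. -/
def AddStronglyFCentral [AddSemigroup S] (F : Filter S) (A : Set S) : Prop :=
  ∀ L, AddIsMinLeftIdealIn (Fbar F) L → ∃ p ∈ L, p + p = p ∧ p ∈ ucl A

/-- Additive version of `FThickFIP`. -/
def AddFThickFIP [Add S] (F : Filter S) (𝒜 : Set (Set S)) : Prop :=
  ∀ T : Finset (Set S), ↑T ⊆ 𝒜 → AddFThick F (⋂₀ (T : Set (Set S)))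

end Add

section Aux

variable {S : Type}

lemma mem_ultra_mul [Mul S] (A : Set S) (p q : Ultrafilter S) :
    A ∈ p * q ↔ {x : S | {y : S | x * y ∈ A} ∈ q} ∈ p := by
  have h := Ultrafilter.eventually_mul p q (· ∈ A)
  simpa [Filter.eventually_iff] using h

lemma mem_Fbar_iff (F : Filter S) (p : Ultrafilter S) :
    p ∈ Fbar F ↔ ∀ V ∈ F, V ∈ p := by
  simp [Fbar, Filter.le_def]

lemma isClosed_Fbar (F : Filter S) : IsClosed (Fbar F) := by
  have : Fbar F = ⋂ (V : F.sets), {p : Ultrafilter S | (V : Set S) ∈ p} := by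
    ext p
    simp only [Set.mem_iInter, Set.mem_setOf_eq, mem_Fbar_iff]
    exact ⟨fun h V => h V V.2, fun h V hV => h ⟨V, hV⟩⟩
  rw [this]
  exact isClosed_iInter fun V => ultrafilter_isClosed_basic _

lemma myContinuousMulRight [Semigroup S] (q : Ultrafilter S) :
    Continuous (fun p : Ultrafilter S => p * q) := by
  rw [show (Ultrafilter.topologicalSpace : TopologicalSpace (Ultrafilter S)) =
      TopologicalSpace.generateFrom (ultrafilterBasis S) from rfl,
    continuous_generateFrom_iff]
  rintro _ ⟨s, rfl⟩
  have : (fun p : Ultrafilter S => p * q) ⁻¹' {u | s ∈ u}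
      = {p : Ultrafilter S | {x : S | {y : S | x * y ∈ s} ∈ q} ∈ p} := by
    ext p
    simp [mem_ultra_mul]
  rw [this]
  exact ultrafilter_isOpen_basic _

lemma mem_of_forall_Fbar (F : Filter S) {B : Set S} (h : ∀ p ∈ Fbar F, B ∈ p) : B ∈ F := by
  by_contra hB
  have hne : (F ⊓ Filter.principal Bᶜ).NeBot := by
    rw [Filter.neBot_iff]
    intro hbot
    rw [Filter.inf_principal_eq_bot, compl_compl] at hbot
    exact hB hbot
  obtain ⟨p, hp⟩ := Ultrafilter.exists_le (F ⊓ Filter.principal Bᶜ)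
  have hpF : p ∈ Fbar F := le_trans hp inf_le_left
  have hBc : Bᶜ ∈ p := le_trans hp inf_le_right (Filter.mem_principal_self _)
  exact (Ultrafilter.compl_mem_iff_notMem.mp hBc) (h p hpF)

/-- For `q ∈ F̄`, the set `F̄ * q` is a closed left ideal of `F̄`. -/
lemma image_mul_left_ideal [Semigroup S] (F : Filter S) [F.NeBot]
    (hsub : ∀ p ∈ Fbar F, ∀ q ∈ Fbar F, p * q ∈ Fbar F)
    {q : Ultrafilter S} (hq : q ∈ Fbar F) :
    IsLeftIdealIn (Fbar F) ((fun p => p * q) '' Fbar F) ∧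
      IsClosed ((fun p => p * q) '' Fbar F) := by
  have hFne : (Fbar F).Nonempty := by
    obtain ⟨p, hp⟩ := Ultrafilter.exists_le F
    exact ⟨p, hp⟩
  refine ⟨⟨hFne.image _, ?_, ?_⟩, ?_⟩
  · rintro _ ⟨p, hp, rfl⟩
    exact hsub p hp q hq
  · rintro p hp _ ⟨r, hr, rfl⟩
    exact ⟨p * r, hsub p hp r hr, mul_assoc p r q⟩
  · exact (((isClosed_Fbar F).isCompact.image (myContinuousMulRight q)).isClosed)

end Aux

/-- If `F̄` is a (closed) subsemigroup of `βS`, then `A` is `F`-thick iff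
there is a minimal left ideal `L` of `F̄` with `L ⊆ cl A`. -/
theorem stmt6 {S : Type} [Semigroup S] (F : Filter S) [F.NeBot]
    (hsub : ∀ p ∈ Fbar F, ∀ q ∈ Fbar F, p * q ∈ Fbar F) (A : Set S) :
    FThick F A ↔ ∃ L, IsMinLeftIdealIn (Fbar F) L ∧ L ⊆ ucl A := by
  constructor
  · -- forward: F-thick ⇒ minimal left ideal inside cl A
    rintro ⟨V, hV, hth⟩
    have hSne : Nonempty S := Filter.nonempty_of_neBot F
    -- Build an ultrafilter q ≤ F containing all translates t⁻¹A, t ∈ V.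
    set f : S → Set S := fun t => {y : S | t * y ∈ A} with hf
    set 𝒯 : Set (Set S) := f '' V with h𝒯
    have hNB : (F ⊓ Filter.generate 𝒯).NeBot := by
      rw [Filter.inf_neBot_iff]
      intro s hs t ht
      rw [Filter.mem_generate_iff] at ht
      obtain ⟨u, hu𝒯, hufin, hsub'⟩ := ht
      -- choose a representative in V for each member of u
      have hch : ∀ B : Set S, ∃ x : S, B ∈ 𝒯 → x ∈ V ∧ f x = B := by
        intro B
        by_cases hB : B ∈ 𝒯
        · obtain ⟨x, hx, hfx⟩ := hB
          exact ⟨x, fun _ => ⟨hx, hfx⟩⟩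
        · exact ⟨Classical.arbitrary S, fun h => absurd h hB⟩
      choose g hg using hch
      have hgfin : (g '' u).Finite := hufin.image g
      set H : Finset S := hgfin.toFinset with hH
      have hHV : ↑H ⊆ V := by
        intro x hx
        rw [hH] at hx
        rw [show ((hgfin.toFinset : Finset S) : Set S) = g '' u from hgfin.coe_toFinset] at hx
        obtain ⟨B, hB, rfl⟩ := hx
        exact (hg B (hu𝒯 hB)).1
      have hmeet := hth H hHV s hs
      obtain ⟨y, hy1, hy2⟩ := hmeet
      refine ⟨y, hy2, hsub' ?_⟩
      intro B hB
      have hy := Set.mem_iInter₂.mp hy1 (g B) (by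
        rw [hH, Set.Finite.mem_toFinset]; exact ⟨B, hB, rfl⟩)
      have : f (g B) = B := (hg B (hu𝒯 hB)).2
      rw [← this]; exact hy
    obtain ⟨q, hq⟩ := Ultrafilter.exists_le (F ⊓ Filter.generate 𝒯)
    have hqF : q ∈ Fbar F := le_trans hq inf_le_left
    have hqt : ∀ t ∈ V, {y : S | t * y ∈ A} ∈ q := by
      intro t ht
      exact le_trans hq inf_le_right (Filter.mem_generate_of_mem ⟨t, ht, rfl⟩)
    -- F̄ * q is a closed left ideal inside cl A
    have hmemA : ∀ p ∈ Fbar F, A ∈ p * q := by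
      intro p hp
      rw [mem_ultra_mul]
      exact Filter.mem_of_superset ((mem_Fbar_iff F p).mp hp V hV) fun t ht => hqt t ht
    obtain ⟨hLI₀, hCl₀⟩ := image_mul_left_ideal F hsub hqF
    set L₀ : Set (Ultrafilter S) := (fun p => p * q) '' Fbar F with hL₀
    have hL₀A : L₀ ⊆ ucl A := by
      rintro _ ⟨p, hp, rfl⟩
      exact hmemA p hp
    -- Zorn's lemma on closed left ideals contained in L₀
    set 𝒞 : Set (Set (Ultrafilter S)) :=
      {L | IsLeftIdealIn (Fbar F) L ∧ IsClosed L} with h𝒞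
    have hzorn : ∃ M, M ⊆ L₀ ∧ Minimal (· ∈ 𝒞) M := by
      apply zorn_superset_nonempty
      · intro c hc𝒞 hchain hcne
        refine ⟨⋂₀ c, ⟨⟨?_, ?_, ?_⟩, ?_⟩, fun s hs => Set.sInter_subset_of_mem hs⟩
        · -- nonempty intersection of a chain of compact closed sets
          haveI : Nonempty c := hcne.to_subtype
          apply IsCompact.nonempty_sInter_of_directed_nonempty_isCompact_isClosed
          · intro x hx y hy
            rcases eq_or_ne x y with rfl | hne
            · exact ⟨x, hx, subset_rfl, subset_rfl⟩
            · rcases hchain hx hy hne with h | h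
              · exact ⟨x, hx, subset_rfl, h⟩
              · exact ⟨y, hy, h, subset_rfl⟩
          · exact fun L hL => (hc𝒞 hL).1.1
          · exact fun L hL => (hc𝒞 hL).2.isCompact
          · exact fun L hL => (hc𝒞 hL).2
        · obtain ⟨L, hL⟩ := hcne
          exact (Set.sInter_subset_of_mem hL).trans (hc𝒞 hL).1.2.1
        · intro p hp r hr
          intro L hL
          exact (hc𝒞 hL).1.2.2 p hp r (hr L hL)
        · exact isClosed_sInter fun L hL => (hc𝒞 hL).2
      · exact ⟨hLI₀, hCl₀⟩
    obtain ⟨M, hML₀, hMmem, hMmin⟩ := hzorn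
    refine ⟨M, ⟨hMmem.1, ?_⟩, hML₀.trans hL₀A⟩
    -- M is minimal among all left ideals
    intro L' hL' hL'M
    obtain ⟨r, hr⟩ := hL'.1
    have hrF : r ∈ Fbar F := hL'.2.1 hr
    obtain ⟨hLIr, hClr⟩ := image_mul_left_ideal F hsub hrF
    have hrsub : (fun p => p * r) '' Fbar F ⊆ L' := by
      rintro _ ⟨p, hp, rfl⟩
      exact hL'.2.2 p hp r hr
    have hMsub : M ⊆ (fun p => p * r) '' Fbar F :=
      hMmin ⟨hLIr, hClr⟩ (hrsub.trans hL'M)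
    exact Set.Subset.antisymm hL'M (hMsub.trans hrsub)
  · -- reverse: minimal left ideal inside cl A ⇒ F-thick
    rintro ⟨L, ⟨⟨⟨q, hqL⟩, hLF, hLmul⟩, _⟩, hLA⟩
    have hqF : q ∈ Fbar F := hLF hqL
    set V : Set S := {x : S | {y : S | x * y ∈ A} ∈ q} with hVdef
    have hVF : V ∈ F := by
      apply mem_of_forall_Fbar
      intro p hp
      have : p * q ∈ L := hLmul p hp q hqL
      have hA : A ∈ p * q := hLA this
      rwa [mem_ultra_mul] at hA
    refine ⟨V, hVF, ?_⟩
    intro H hHV B hB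
    have hinter : (⋂ t ∈ H, {y : S | t * y ∈ A}) ∈ q :=
      (Filter.biInter_finset_mem H).mpr fun t ht => hHV ht
    have hBq : B ∈ q := (mem_Fbar_iff F q).mp hqF B hB
    exact Ultrafilter.nonempty_of_mem (Filter.inter_mem hinter hBq)
end

section
/- Let S and T be discrete semigroups. If A is strongly central in S and B is strongly central in T, then A × B is strongly central in S × T. -/
attribute [local instance] Ultrafilter.mul Ultrafilter.semigroup
  Ultrafilter.add Ultrafilter.addSemigroup

/-- `A` is strongly central: every minimal left ideal of `βS` contains an idempotent
in `cl A`. -/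
def StronglyCentral {S : Type} [Semigroup S] (A : Set S) : Prop :=
  ∀ L, IsMinLeftIdealIn (Set.univ : Set (Ultrafilter S)) L →
    ∃ p ∈ L, p * p = p ∧ p ∈ ucl A


section Stmt14Aux

open Filter

variable {S T : Type}

private lemma mem_umul {M : Type} [Mul M] {U V : Ultrafilter M} {s : Set M} :
    s ∈ U * V ↔ {a | {b | a * b ∈ s} ∈ V} ∈ U := Iff.rfl

private lemma umap_mul {S T : Type} [Mul S] [Mul T] (f : S → T)
    (hf : ∀ a b, f (a * b) = f a * f b) (p q : Ultrafilter S) :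
    (p * q).map f = p.map f * q.map f := by
  ext s
  simp only [mem_umul, Ultrafilter.mem_map, Set.preimage_setOf_eq, Set.mem_preimage, hf]

/-- The product ultrafilter. -/
private def uprod (p : Ultrafilter S) (q : Ultrafilter T) : Ultrafilter (S × T) :=
  p.bind fun a => q.map (Prod.mk a)

private lemma mem_uprod {p : Ultrafilter S} {q : Ultrafilter T} {s : Set (S × T)} :
    s ∈ uprod p q ↔ {a | {b | (a, b) ∈ s} ∈ q} ∈ p := by
  have h : (↑(uprod p q) : Filter (S × T)) =
      Filter.bind (↑p : Filter S)
        (fun a => (↑(Ultrafilter.map (Prod.mk a) q) : Filter (S × T))) := rfl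
  rw [← Ultrafilter.mem_coe, h, Filter.mem_bind']
  rfl

private lemma uprod_fst (p : Ultrafilter S) (q : Ultrafilter T) :
    (uprod p q).map Prod.fst = p := by
  ext s
  rw [Ultrafilter.mem_map]
  show Prod.fst ⁻¹' s ∈ uprod p q ↔ _
  rw [mem_uprod]
  have h : {a | {b : T | (a, b) ∈ Prod.fst ⁻¹' s} ∈ q} = s := by
    ext a
    by_cases h : a ∈ s
    · simp only [Set.mem_preimage, h, Set.setOf_true, Set.mem_setOf_eq, iff_true]
      exact Filter.univ_mem
    · simp only [Set.mem_preimage, h, Set.setOf_false, Set.mem_setOf_eq, iff_false]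
      exact Ultrafilter.empty_notMem
  rw [h]

private lemma uprod_snd (p : Ultrafilter S) (q : Ultrafilter T) :
    (uprod p q).map Prod.snd = q := by
  ext s
  rw [Ultrafilter.mem_map]
  show Prod.snd ⁻¹' s ∈ uprod p q ↔ _
  rw [mem_uprod]
  by_cases h : s ∈ q
  · have h2 : {a : S | {b : T | (a, b) ∈ Prod.snd ⁻¹' s} ∈ q} = Set.univ := by
      ext a
      simp only [Set.mem_preimage, Set.mem_setOf_eq, Set.mem_univ, iff_true]
      exact h
    rw [h2]
    simp only [h, iff_true]
    exact Filter.univ_mem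
  · have h2 : {a : S | {b : T | (a, b) ∈ Prod.snd ⁻¹' s} ∈ q} = ∅ := by
      ext a
      simp only [Set.mem_preimage, Set.mem_setOf_eq, Set.mem_empty_iff_false, iff_false]
      exact h
    rw [h2]
    simp only [h, iff_false]
    exact Ultrafilter.empty_notMem

private lemma continuous_umap (f : S → T) : Continuous (Ultrafilter.map f) :=
  ultrafilterBasis_is_basis.continuous_iff.2 <| Set.forall_mem_range.mpr fun s =>
    ultrafilter_isOpen_basic (f ⁻¹' s)

private lemma range_eq_of_min [Semigroup S] {L : Set (Ultrafilter S)}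
    (hL : IsMinLeftIdealIn Set.univ L) {a : Ultrafilter S} (ha : a ∈ L) :
    Set.range (· * a) = L := by
  apply hL.2
  · refine ⟨⟨a * a, a, rfl⟩, fun _ _ => trivial, ?_⟩
    rintro p - x ⟨u, rfl⟩
    exact ⟨p * u, mul_assoc p u a⟩
  · rintro x ⟨u, rfl⟩
    exact hL.1.2.2 u trivial a ha

private lemma exists_mul_eq_of_min [Semigroup S] {L : Set (Ultrafilter S)}
    (hL : IsMinLeftIdealIn Set.univ L) {a b : Ultrafilter S} (ha : a ∈ L) (hb : b ∈ L) :
    ∃ v, v * a = b := by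
  rw [← range_eq_of_min hL ha] at hb
  exact hb

private lemma min_isClosed [Semigroup S] {L : Set (Ultrafilter S)}
    (hL : IsMinLeftIdealIn Set.univ L) : IsClosed L := by
  obtain ⟨a, ha⟩ := hL.1.1
  rw [← range_eq_of_min hL ha]
  exact (isCompact_range (Ultrafilter.continuous_mul_left a)).isClosed

private lemma min_image [Semigroup S] [Semigroup T] (f : Ultrafilter S → Ultrafilter T)
    (hf : ∀ p q, f (p * q) = f p * f q) (hs : Function.Surjective f)
    {L : Set (Ultrafilter S)} (hL : IsMinLeftIdealIn Set.univ L) :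
    IsMinLeftIdealIn Set.univ (f '' L) := by
  obtain ⟨a, ha⟩ := hL.1.1
  constructor
  · refine ⟨⟨f a, a, ha, rfl⟩, fun _ _ => trivial, ?_⟩
    rintro p - x ⟨u, hu, rfl⟩
    obtain ⟨p', rfl⟩ := hs p
    exact ⟨p' * u, hL.1.2.2 p' trivial u hu, hf p' u⟩
  · intro L' hL' hsub
    have key : {r ∈ L | f r ∈ L'} = L := by
      apply hL.2
      · obtain ⟨y, hy⟩ := hL'.1
        obtain ⟨u, hu, huy⟩ := hsub hy
        refine ⟨⟨u, hu, huy ▸ hy⟩, fun x hx => trivial, ?_⟩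
        rintro p - x ⟨hxL, hxL'⟩
        refine ⟨hL.1.2.2 p trivial x hxL, ?_⟩
        rw [hf]
        exact hL'.2.2 (f p) trivial (f x) hxL'
      · exact fun x hx => hx.1
    apply Set.Subset.antisymm hsub
    rintro x ⟨u, hu, rfl⟩
    rw [← key] at hu
    exact hu.2

end Stmt14Aux

/-- The product of strongly central sets is strongly central. -/
theorem stmt14 {S T : Type} [Semigroup S] [Semigroup T] (A : Set S) (B : Set T)
    (hA : StronglyCentral A) (hB : StronglyCentral B) :
    StronglyCentral (A ×ˢ B) := by
  intro L hL
  -- basic nonemptiness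
  obtain ⟨a, ha⟩ := hL.1.1
  have hne : Nonempty (S × T) := Filter.nonempty_of_neBot (↑a : Filter (S × T))
  have hneS : Nonempty S := ⟨(Classical.arbitrary (S × T)).1⟩
  have hneT : Nonempty T := ⟨(Classical.arbitrary (S × T)).2⟩
  -- projections
  set f1 : Ultrafilter (S × T) → Ultrafilter S := Ultrafilter.map Prod.fst with hf1
  set f2 : Ultrafilter (S × T) → Ultrafilter T := Ultrafilter.map Prod.snd with hf2
  have hmul1 : ∀ p q, f1 (p * q) = f1 p * f1 q := fun p q =>
    umap_mul Prod.fst (fun _ _ => rfl) p q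
  have hmul2 : ∀ p q, f2 (p * q) = f2 p * f2 q := fun p q =>
    umap_mul Prod.snd (fun _ _ => rfl) p q
  have hs1 : Function.Surjective f1 := fun p =>
    ⟨uprod p (pure (Classical.arbitrary T)), uprod_fst _ _⟩
  have hs2 : Function.Surjective f2 := fun q =>
    ⟨uprod (pure (Classical.arbitrary S)) q, uprod_snd _ _⟩
  -- images of L are minimal left ideals
  have hL1 := min_image f1 hmul1 hs1 hL
  have hL2 := min_image f2 hmul2 hs2 hL
  obtain ⟨p, hpL, hpp, hpA⟩ := hA _ hL1
  obtain ⟨q, hqL, hqq, hqB⟩ := hB _ hL2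
  -- find r ∈ L mapping to (p, q)
  obtain ⟨r₁, hr₁L, hr₁⟩ := hpL
  have hsnd : f2 r₁ ∈ f2 '' L := ⟨r₁, hr₁L, rfl⟩
  obtain ⟨v, hv⟩ := exists_mul_eq_of_min hL2 hsnd hqL
  set w : Ultrafilter (S × T) := uprod p v with hw
  have hr : w * r₁ ∈ L := hL.1.2.2 w trivial r₁ hr₁L
  have hrf : f1 (w * r₁) = p := by
    rw [hmul1]
    show (uprod p v).map Prod.fst * f1 r₁ = p
    rw [uprod_fst, hr₁, hpp]
  have hrs : f2 (w * r₁) = q := by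
    rw [hmul2]
    show (uprod p v).map Prod.snd * f2 r₁ = q
    rw [uprod_snd, hv]
  -- the fiber is a compact subsemigroup
  set M : Set (Ultrafilter (S × T)) := L ∩ f1 ⁻¹' {p} ∩ f2 ⁻¹' {q} with hM
  have hMclosed : IsClosed M :=
    ((min_isClosed hL).inter
      (IsClosed.preimage (continuous_umap Prod.fst) isClosed_singleton)).inter
      (IsClosed.preimage (continuous_umap Prod.snd) isClosed_singleton)
  have hMne : M.Nonempty := ⟨w * r₁, ⟨⟨hr, hrf⟩, hrs⟩⟩
  have hMmul : ∀ x ∈ M, ∀ y ∈ M, x * y ∈ M := by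
    rintro x ⟨⟨hxL, hxp⟩, hxq⟩ y ⟨⟨hyL, hyp⟩, hyq⟩
    refine ⟨⟨hL.1.2.2 x trivial y hyL, ?_⟩, ?_⟩
    · show f1 (x * y) = p
      rw [hmul1, Set.mem_preimage, Set.mem_singleton_iff] at *
      rw [hxp, hyp, hpp]
    · show f2 (x * y) = q
      rw [hmul2, Set.mem_preimage, Set.mem_singleton_iff] at *
      rw [hxq, hyq, hqq]
  obtain ⟨e, heM, hee⟩ := exists_idempotent_in_compact_subsemigroup
    Ultrafilter.continuous_mul_left M hMne hMclosed.isCompact hMmul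
  refine ⟨e, heM.1.1, hee, ?_⟩
  -- e contains A ×ˢ B
  have heA : Prod.fst ⁻¹' A ∈ e := by
    have := heM.1.2
    rw [Set.mem_preimage, Set.mem_singleton_iff] at this
    have : A ∈ f1 e := this ▸ hpA
    rwa [Ultrafilter.mem_map] at this
  have heB : Prod.snd ⁻¹' B ∈ e := by
    have := heM.2
    rw [Set.mem_preimage, Set.mem_singleton_iff] at this
    have : B ∈ f2 e := this ▸ hqB
    rwa [Ultrafilter.mem_map] at this
  show A ×ˢ B ∈ e
  rw [Set.prod_eq]
  exact Filter.inter_mem heA heB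
end

section
/- Let S be a semigroup and F a filter on S such that F ⊆ F·F (F is an idempotent filter). Then F̄ = ⋂_{V∈F} cl(V) is a closed subsemigroup of βS. -/
attribute [local instance] Ultrafilter.mul Ultrafilter.semigroup
  Ultrafilter.add Ultrafilter.addSemigroup

/-- If `F ⊆ F · F`, then `F̄` is a closed subsemigroup of `βS`. -/
theorem stmt18 {S : Type} [Semigroup S] (F : Filter S) [F.NeBot]
    (hidem : IdemFilter F) :
    IsClosed (Fbar F) ∧ ∀ p ∈ Fbar F, ∀ q ∈ Fbar F, p * q ∈ Fbar F := by
  constructor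
  · have : Fbar F = ⋂ V ∈ F.sets, {p : Ultrafilter S | V ∈ p} := by
      ext p
      simp only [Fbar, Set.mem_iInter, Set.mem_setOf_eq, Filter.le_def]
      rfl
    rw [this]
    exact isClosed_biInter fun V _ => ultrafilter_isClosed_basic V
  · intro p hp q hq A hA
    have hB := hidem A hA
    have hBp : {x : S | {y : S | x * y ∈ A} ∈ F} ∈ p := hp hB
    have : A ∈ (p * q : Ultrafilter S) := by
      show ∀ᶠ m in ↑(p * q), m ∈ A
      exact (Ultrafilter.eventually_mul p q (· ∈ A)).2
        (Filter.mem_of_superset hBp fun x hx => hq hx)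
    exact this
end
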